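/- arXiv:1204.6373 — 17 statements merged into one kernel-verified Lean document; each statement's English description precedes it below -/
import Mathlib

section
/- Let (A, μ, α) be a Hom-Novikov algebra and define [x,y] = μ(x,y) − μ(y,x). Then for all x, y, z in A, [x,y]·α(z) + [y,z]·α(x) + [z,x]·α(y) = 0, where · denotes the product μ. -/
/-- In a Hom-Novikov algebra, `[x,y]α(z) + [y,z]α(x) + [z,x]α(y) = 0`. -/
theorem stmt_0 {F A : Type*} [Field F] [CharZero F] [AddCommGroup A] [Module F A]
    (μ : A →ₗ[F] A →ₗ[F] A) (α : A →ₗ[F] A)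
    (hα : ∀ x y, α (μ x y) = μ (α x) (α y))
    (hN1 : ∀ x y z, μ (μ x y) (α z) = μ (μ x z) (α y))
    (hN2 : ∀ x y z, μ (μ x y) (α z) - μ (α x) (μ y z)
        = μ (μ y x) (α z) - μ (α y) (μ x z)) :
    ∀ x y z : A,
      μ (μ x y - μ y x) (α z) + μ (μ y z - μ z y) (α x)
        + μ (μ z x - μ x z) (α y) = 0 := by
  intro x y z
  simp only [map_sub, LinearMap.sub_apply]
  rw [hN1 x y z, hN1 y z x, hN1 z x y]
  abel
end

section
/- Let (A, μ, α) be a Hom-Novikov algebra and define [x,y] = μ(x,y) − μ(y,x). Then for all x, y, z in A, α(x)·[y,z] + α(y)·[z,x] + α(z)·[x,y] = 0, where · denotes the product μ. -/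
/-- In a Hom-Novikov algebra, `α(x)[y,z] + α(y)[z,x] + α(z)[x,y] = 0`. -/
theorem stmt_1 {F A : Type*} [Field F] [CharZero F] [AddCommGroup A] [Module F A]
    (μ : A →ₗ[F] A →ₗ[F] A) (α : A →ₗ[F] A)
    (hα : ∀ x y, α (μ x y) = μ (α x) (α y))
    (hN1 : ∀ x y z, μ (μ x y) (α z) = μ (μ x z) (α y))
    (hN2 : ∀ x y z, μ (μ x y) (α z) - μ (α x) (μ y z)
        = μ (μ y x) (α z) - μ (α y) (μ x z)) :
    ∀ x y z : A,
      μ (α x) (μ y z - μ z y) + μ (α y) (μ z x - μ x z)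
        + μ (α z) (μ x y - μ y x) = 0 := by
  intro x y z
  have e1 := hN2 x y z
  have e2 := hN2 y z x
  have e3 := hN2 z x y
  have f1 := hN1 x y z
  have f2 := hN1 y z x
  have f3 := hN1 z x y
  simp only [map_sub]
  linear_combination (norm := module) -e1 - e2 - e3 + f1 + f2 + f3
end

section
/- Let (A, μ, α) be a Hom-Novikov algebra. Then (A, [·,·], α) with [x,y] = μ(x,y) − μ(y,x) is a Hom-Lie algebra, i.e., the bracket is skew-symmetric and satisfies the Hom-Jacobi identity [[x,y],α(z)] + [[z,x],α(y)] + [[y,z],α(x)] = 0. -/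
/-- The commutator bracket of a Hom-Novikov algebra gives a Hom-Lie algebra. -/
theorem stmt_2 {F A : Type*} [Field F] [CharZero F] [AddCommGroup A] [Module F A]
    (μ : A →ₗ[F] A →ₗ[F] A) (α : A →ₗ[F] A)
    (hα : ∀ x y, α (μ x y) = μ (α x) (α y))
    (hN1 : ∀ x y z, μ (μ x y) (α z) = μ (μ x z) (α y))
    (hN2 : ∀ x y z, μ (μ x y) (α z) - μ (α x) (μ y z)
        = μ (μ y x) (α z) - μ (α y) (μ x z)) :
    (∀ x y : A, μ x y - μ y x = -(μ y x - μ x y)) ∧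
    (∀ x y z : A,
      (μ (μ x y - μ y x) (α z) - μ (α z) (μ x y - μ y x))
        + (μ (μ z x - μ x z) (α y) - μ (α y) (μ z x - μ x z))
        + (μ (μ y z - μ z y) (α x) - μ (α x) (μ y z - μ z y)) = 0) := by
  refine ⟨fun x y => by abel, fun x y z => ?_⟩
  simp only [map_sub, LinearMap.sub_apply]
  have h1 := hN2 x y z
  have h2 := hN2 y z x
  have h3 := hN2 z x y
  have h4 := hN1 x y z
  have h5 := hN1 y z x
  have h6 := hN1 z x y
  have h7 := hN1 y x z
  have h8 := hN1 z y x
  have h9 := hN1 x z y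
  linear_combination (norm := abel) h1 + h2 + h3
end

section
/- Let (A, μ) be a Novikov algebra and α: A → A an algebra homomorphism. Then (A, α∘μ, α) is a Hom-Novikov algebra. -/
/-- A Novikov algebra twisted by an algebra endomorphism is a Hom-Novikov algebra. -/
theorem stmt_3 {F A : Type*} [Field F] [CharZero F] [AddCommGroup A] [Module F A]
    (μ : A →ₗ[F] A →ₗ[F] A) (α : A →ₗ[F] A)
    (hα : ∀ x y, α (μ x y) = μ (α x) (α y))
    (hN1 : ∀ x y z, μ (μ x y) z = μ (μ x z) y)
    (hN2 : ∀ x y z, μ (μ x y) z - μ x (μ y z) = μ (μ y x) z - μ y (μ x z)) :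
    (∀ x y : A, α (α (μ x y)) = α (μ (α x) (α y))) ∧
    (∀ x y z : A, α (μ (α (μ x y)) (α z)) = α (μ (α (μ x z)) (α y))) ∧
    (∀ x y z : A, α (μ (α (μ x y)) (α z)) - α (μ (α x) (α (μ y z)))
        = α (μ (α (μ y x)) (α z)) - α (μ (α y) (α (μ x z)))) := by
  refine ⟨fun x y => by rw [hα], fun x y z => ?_, fun x y z => ?_⟩
  · simp only [← hα]; rw [hN1]
  · simp only [← hα, ← map_sub]; rw [hN2]
end

section
/- If (A, μ, α) is an involutive Hom-Novikov algebra (i.e., α² = id and α is an algebra homomorphism), then (A, α∘μ) is a Novikov algebra. -/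
/-- An involutive Hom-Novikov algebra untwists to a Novikov algebra via `α ∘ μ`. -/
theorem stmt_4 {F A : Type*} [Field F] [CharZero F] [AddCommGroup A] [Module F A]
    (μ : A →ₗ[F] A →ₗ[F] A) (α : A →ₗ[F] A)
    (hα : ∀ x y, α (μ x y) = μ (α x) (α y))
    (hinv : ∀ x : A, α (α x) = x)
    (hN1 : ∀ x y z, μ (μ x y) (α z) = μ (μ x z) (α y))
    (hN2 : ∀ x y z, μ (μ x y) (α z) - μ (α x) (μ y z)
        = μ (μ y x) (α z) - μ (α y) (μ x z)) :
    (∀ x y z : A, α (μ (α (μ x y)) z) = α (μ (α (μ x z)) y)) ∧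
    (∀ x y z : A, α (μ (α (μ x y)) z) - α (μ x (α (μ y z)))
        = α (μ (α (μ y x)) z) - α (μ y (α (μ x z)))) := by
  constructor
  · intro x y z
    simp only [hα, hinv]; exact hN1 x y z
  · intro x y z
    simp only [hα, hinv]; exact hN2 x y z
end

section
/- Let (A, μ, α) be a regular Hom-Novikov algebra (α an algebra automorphism). Define [x,y]_{α⁻¹} = α⁻¹(μ(x,y) − μ(y,x)). Then (A, [·,·]_{α⁻¹}) is a Lie algebra. -/
/-- For a regular Hom-Novikov algebra, `[x,y] = α⁻¹(xy - yx)` defines a Lie algebra. -/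
theorem stmt_5 {F A : Type*} [Field F] [CharZero F] [AddCommGroup A] [Module F A]
    (μ : A →ₗ[F] A →ₗ[F] A) (α : A ≃ₗ[F] A)
    (hα : ∀ x y, α (μ x y) = μ (α x) (α y))
    (hN1 : ∀ x y z, μ (μ x y) (α z) = μ (μ x z) (α y))
    (hN2 : ∀ x y z, μ (μ x y) (α z) - μ (α x) (μ y z)
        = μ (μ y x) (α z) - μ (α y) (μ x z)) :
    (∀ x y : A, α.symm (μ x y - μ y x) = -(α.symm (μ y x - μ x y))) ∧
    (∀ x y z : A,
      α.symm (μ (α.symm (μ x y - μ y x)) z - μ z (α.symm (μ x y - μ y x)))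
        + α.symm (μ (α.symm (μ y z - μ z y)) x - μ x (α.symm (μ y z - μ z y)))
        + α.symm (μ (α.symm (μ z x - μ x z)) y - μ y (α.symm (μ z x - μ x z))) = 0) := by
  have key : ∀ a b : A, μ a b = α.symm (μ (α a) (α b)) := fun a b => by
    rw [← hα]; simp
  constructor
  · intro x y
    rw [← map_neg, neg_sub]
  · intro x y z
    have step : ∀ u v w : A,
        α.symm (μ (α.symm (μ u v - μ v u)) w - μ w (α.symm (μ u v - μ v u)))
          = α.symm (α.symm (μ (μ u v - μ v u) (α w) - μ (α w) (μ u v - μ v u))) := by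
      intro u v w
      congr 1
      rw [key (α.symm (μ u v - μ v u)) w, key w (α.symm (μ u v - μ v u))]
      simp only [LinearEquiv.apply_symm_apply, map_sub]
    rw [step, step, step, ← map_add, ← map_add, ← map_add, ← map_add]
    have S : (μ (μ x y - μ y x) (α z) - μ (α z) (μ x y - μ y x))
        + (μ (μ y z - μ z y) (α x) - μ (α x) (μ y z - μ z y))
        + (μ (μ z x - μ x z) (α y) - μ (α y) (μ z x - μ x z)) = 0 := by
      simp only [map_sub, LinearMap.sub_apply]
      linear_combination (norm := abel) hN2 x y z + hN2 y z x + hN2 z x y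
    rw [S]
    simp
end

section
/- Let (A, μ, α) be an involutive Hom-Novikov algebra. Define [x,y]_α = α(μ(x,y) − μ(y,x)). Then (A, [·,·]_α) is a Lie algebra. -/
/-- For an involutive Hom-Novikov algebra, `[x,y]_α = α(xy - yx)` defines a Lie algebra. -/
theorem stmt_6 {F A : Type*} [Field F] [CharZero F] [AddCommGroup A] [Module F A]
    (μ : A →ₗ[F] A →ₗ[F] A) (α : A →ₗ[F] A)
    (hα : ∀ x y, α (μ x y) = μ (α x) (α y))
    (hinv : ∀ x : A, α (α x) = x)
    (hN1 : ∀ x y z, μ (μ x y) (α z) = μ (μ x z) (α y))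
    (hN2 : ∀ x y z, μ (μ x y) (α z) - μ (α x) (μ y z)
        = μ (μ y x) (α z) - μ (α y) (μ x z)) :
    (∀ x y : A, α (μ x y - μ y x) = -(α (μ y x - μ x y))) ∧
    (∀ x y z : A,
      α (μ (α (μ x y - μ y x)) z - μ z (α (μ x y - μ y x)))
        + α (μ (α (μ y z - μ z y)) x - μ x (α (μ y z - μ z y)))
        + α (μ (α (μ z x - μ x z)) y - μ y (α (μ z x - μ x z))) = 0) := by
  constructor
  · intro x y
    rw [← map_neg]
    congr 1
    abel
  · intro x y z
    have key : ∀ u w : A, α (μ (α u) w - μ w (α u)) = μ u (α w) - μ (α w) u := by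
      intro u w
      rw [map_sub, hα, hα, hinv]
    rw [key, key, key]
    simp only [map_sub, LinearMap.sub_apply]
    have h1 := hN1 x y z
    have h2 := hN1 y z x
    have h3 := hN1 z x y
    have e1 := hN2 x y z
    have e2 := hN2 y z x
    have e3 := hN2 z x y
    linear_combination (norm := abel) e1 + e2 + e3
end

section
/- Let (A, μ, α) be a commutative Hom-associative algebra and ∂: A → A a linear map commuting with α and satisfying ∂(x·∂(y)) = ∂(x)·∂(y) for all x, y. Define x⋆y = x·∂(y). Then (A, ⋆, α) is a Hom-Novikov algebra (in the sense that ⋆ satisfies (x⋆y)⋆α(z) = (x⋆z)⋆α(y) and (x⋆y)⋆α(z) − α(x)⋆(y⋆z) = (y⋆x)⋆α(z) − α(y)⋆(x⋆z)). -/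
/-- From a commutative Hom-associative algebra and a map `∂` with
`∂(x·∂y) = ∂x·∂y` commuting with `α`, `x⋆y = x·∂y` gives a Hom-Novikov algebra. -/
theorem stmt_7 {F A : Type*} [Field F] [CharZero F] [AddCommGroup A] [Module F A]
    (μ : A →ₗ[F] A →ₗ[F] A) (α : A →ₗ[F] A) (D : A →ₗ[F] A)
    (hα : ∀ x y, α (μ x y) = μ (α x) (α y))
    (hcomm : ∀ x y, μ x y = μ y x)
    (hassoc : ∀ x y z, μ (α x) (μ y z) = μ (μ x y) (α z))
    (hDα : ∀ x, D (α x) = α (D x))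
    (hD : ∀ x y, D (μ x (D y)) = μ (D x) (D y)) :
    (∀ x y z : A, μ (μ x (D y)) (D (α z)) = μ (μ x (D z)) (D (α y))) ∧
    (∀ x y z : A,
      μ (μ x (D y)) (D (α z)) - μ (α x) (D (μ y (D z)))
        = μ (μ y (D x)) (D (α z)) - μ (α y) (D (μ x (D z)))) := by
  have key : ∀ x y z : A, μ (μ x (D y)) (D (α z)) = μ (α x) (μ (D y) (D z)) := by
    intro x y z
    rw [hDα, hassoc]
  constructor
  · intro x y z
    rw [key, key, hcomm (D y) (D z)]
  · intro x y z
    rw [key, key, hD, hD, hcomm (α x) (μ (D y) (D z)), hcomm (α y) (μ (D x) (D z))]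
    abel
end

section
/- Let (A, μ, α, B) be a quadratic Hom-Novikov algebra with α an algebra automorphism satisfying B(α(x), y) = B(x, α(y)). Define B_α(x,y) = B(α(x), y) and [x,y] = μ(x,y) − μ(y,x). Then B_α is symmetric, nondegenerate, satisfies B_α([x,y], z) = B_α(x, [y,z]) and B_α(α(x), y) = B_α(x, α(y)); in particular (A, [·,·], α, B_α) is a quadratic Hom-Lie algebra. -/
/-- The sub-adjacent Hom-Lie algebra of a quadratic Hom-Novikov algebra (with
automorphism `α` compatible with `B`) is a quadratic Hom-Lie algebra w.r.t.
`B_α(x,y) = B(α x, y)`. -/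
theorem stmt_9 {F A : Type*} [Field F] [CharZero F] [AddCommGroup A] [Module F A]
    (μ : A →ₗ[F] A →ₗ[F] A) (α : A ≃ₗ[F] A) (B : A →ₗ[F] A →ₗ[F] F)
    (hα : ∀ x y, α (μ x y) = μ (α x) (α y))
    (hN1 : ∀ x y z, μ (μ x y) (α z) = μ (μ x z) (α y))
    (hN2 : ∀ x y z, μ (μ x y) (α z) - μ (α x) (μ y z)
        = μ (μ y x) (α z) - μ (α y) (μ x z))
    (hBsymm : ∀ x y, B x y = B y x)
    (hBnd : ∀ x, (∀ y, B x y = 0) → x = 0)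
    (hBinv : ∀ x y z, B (μ x y) (α z) = B (α x) (μ y z))
    (hBα : ∀ x y, B (α x) y = B x (α y)) :
    (∀ x y : A, B (α x) y = B (α y) x) ∧
    (∀ x, (∀ y, B (α x) y = 0) → x = 0) ∧
    (∀ x y z : A, B (α (μ x y - μ y x)) z = B (α x) (μ y z - μ z y)) ∧
    (∀ x y : A, B (α (α x)) y = B (α x) (α y)) ∧
    (∀ x y : A, μ x y - μ y x = -(μ y x - μ x y)) ∧
    (∀ x y z : A,
      (μ (μ x y - μ y x) (α z) - μ (α z) (μ x y - μ y x))
        + (μ (μ z x - μ x z) (α y) - μ (α y) (μ z x - μ x z))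
        + (μ (μ y z - μ z y) (α x) - μ (α x) (μ y z - μ z y)) = 0) := by
  refine ⟨?_, ?_, ?_, ?_, ?_, ?_⟩
  · intro x y
    rw [hBsymm (α x) y, hBα y x]
  · intro x h
    have : α x = 0 := hBnd _ h
    simpa using congrArg α.symm this
  · intro x y z
    have key : B (α (μ y x)) z = B (α x) (μ z y) := by
      rw [hBα, hBinv y x z, hBsymm, hBinv x z y]
    rw [map_sub, map_sub, LinearMap.sub_apply, map_sub, key, hBα (μ x y) z,
      hBinv x y z, hBα]
  · intro x y
    rw [hBα (α x) y]
  · intro x y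
    abel
  · intro x y z
    have h1 := hN2 x y z
    have h2 := hN2 z x y
    have h3 := hN2 y z x
    simp only [map_sub, LinearMap.sub_apply] at *
    linear_combination (norm := module) h1 + h2 + h3
end

section
/- Let (A, μ, B) be a quadratic Novikov algebra with an algebra automorphism α satisfying B(α(x), y) = B(x, α(y)). Define [x,y]_α = α(μ(x,y) − μ(y,x)) and B_α(x,y) = B(α(x), y). Then (A, [·,·]_α, α, B_α) is a quadratic Hom-Lie algebra. -/
private lemma jacobi_aux {F A : Type*} [Field F] [AddCommGroup A] [Module F A]
    (μ : A →ₗ[F] A →ₗ[F] A)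
    (hN2 : ∀ x y z, μ (μ x y) z - μ x (μ y z) = μ (μ y x) z - μ y (μ x z))
    (x y z : A) :
    (μ (μ x y - μ y x) z - μ z (μ x y - μ y x))
      + (μ (μ z x - μ x z) y - μ y (μ z x - μ x z))
      + (μ (μ y z - μ z y) x - μ x (μ y z - μ z y)) = 0 := by
  have h1 := hN2 x y z
  have h2 := hN2 z x y
  have h3 := hN2 y z x
  simp only [map_sub, LinearMap.sub_apply] at *
  linear_combination (norm := abel) h1 + h2 + h3

/-- A quadratic Novikov algebra with a compatible automorphism `α` yields a
quadratic Hom-Lie algebra with bracket `[x,y]_α = α(xy - yx)` and form `B_α`. -/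
theorem stmt_10 {F A : Type*} [Field F] [CharZero F] [AddCommGroup A] [Module F A]
    (μ : A →ₗ[F] A →ₗ[F] A) (α : A ≃ₗ[F] A) (B : A →ₗ[F] A →ₗ[F] F)
    (hα : ∀ x y, α (μ x y) = μ (α x) (α y))
    (hN1 : ∀ x y z, μ (μ x y) z = μ (μ x z) y)
    (hN2 : ∀ x y z, μ (μ x y) z - μ x (μ y z) = μ (μ y x) z - μ y (μ x z))
    (hBsymm : ∀ x y, B x y = B y x)
    (hBnd : ∀ x, (∀ y, B x y = 0) → x = 0)
    (hBinv : ∀ x y z, B (μ x y) z = B x (μ y z))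
    (hBα : ∀ x y, B (α x) y = B x (α y)) :
    (∀ x y : A, α (μ x y - μ y x) = -(α (μ y x - μ x y))) ∧
    (∀ x y z : A,
      α (μ (α (μ x y - μ y x)) (α z) - μ (α z) (α (μ x y - μ y x)))
        + α (μ (α (μ z x - μ x z)) (α y) - μ (α y) (α (μ z x - μ x z)))
        + α (μ (α (μ y z - μ z y)) (α x) - μ (α x) (α (μ y z - μ z y))) = 0) ∧
    (∀ x y : A, B (α x) y = B (α y) x) ∧
    (∀ x, (∀ y, B (α x) y = 0) → x = 0) ∧
    (∀ x y z : A, B (α (α (μ x y - μ y x))) z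
        = B (α x) (α (μ y z - μ z y))) ∧
    (∀ x y : A, B (α (α x)) y = B (α x) (α y)) := by
  have hcomm : ∀ x y, α (μ x y - μ y x) = μ (α x) (α y) - μ (α y) (α x) := by
    intro x y; rw [map_sub, hα, hα]
  refine ⟨?_, ?_, ?_, ?_, ?_, ?_⟩
  · intro x y; rw [← map_neg, neg_sub]
  · intro x y z
    rw [hcomm x y, hcomm z x, hcomm y z, ← map_add, ← map_add]
    rw [jacobi_aux μ hN2 (α x) (α y) (α z), map_zero]
  · intro x y; rw [hBα, hBsymm]
  · intro x h
    have hz : α x = 0 := hBnd (α x) h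
    exact α.injective (by simp [hz])
  · intro x y z
    rw [hBα (α (μ x y - μ y x)) z, hcomm x y, hcomm y z]
    simp only [map_sub, LinearMap.sub_apply]
    rw [hBinv (α x), hBinv (α y) (α x) (α z), hBsymm (α y),
      hBinv (α x) (α z) (α y)]
  · intro x y; exact hBα (α x) y
end

section
/- Let (A, μ, α, B) be a quadratic Hom-Novikov algebra with α an involution (α² = id) satisfying B(α(x), y) = B(x, α(y)). Then (A, α∘μ, B) is a quadratic Novikov algebra; in particular B(x⋆y, z) = B(x, y⋆z) where x⋆y = α(μ(x,y)). -/
/-- A quadratic Hom-Novikov algebra with a compatible involution `α` untwists to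
a quadratic Novikov algebra `(A, α∘μ, B)`. -/
theorem stmt_11 {F A : Type*} [Field F] [CharZero F] [AddCommGroup A] [Module F A]
    (μ : A →ₗ[F] A →ₗ[F] A) (α : A →ₗ[F] A) (B : A →ₗ[F] A →ₗ[F] F)
    (hα : ∀ x y, α (μ x y) = μ (α x) (α y))
    (hinv : ∀ x : A, α (α x) = x)
    (hN1 : ∀ x y z, μ (μ x y) (α z) = μ (μ x z) (α y))
    (hN2 : ∀ x y z, μ (μ x y) (α z) - μ (α x) (μ y z)
        = μ (μ y x) (α z) - μ (α y) (μ x z))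
    (hBsymm : ∀ x y, B x y = B y x)
    (hBnd : ∀ x, (∀ y, B x y = 0) → x = 0)
    (hBinv : ∀ x y z, B (μ x y) (α z) = B (α x) (μ y z))
    (hBα : ∀ x y, B (α x) y = B x (α y)) :
    (∀ x y z : A, α (μ (α (μ x y)) z) = α (μ (α (μ x z)) y)) ∧
    (∀ x y z : A, α (μ (α (μ x y)) z) - α (μ x (α (μ y z)))
        = α (μ (α (μ y x)) z) - α (μ y (α (μ x z)))) ∧
    (∀ x y z : A, B (α (μ x y)) z = B x (α (μ y z))) := by
  refine ⟨fun x y z => ?_, fun x y z => ?_, fun x y z => ?_⟩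
  · simp only [hα, hinv]
    exact hN1 x y z
  · simp only [hα, hinv]
    exact hN2 x y z
  · rw [hBα, ← hinv z, hBinv, hBα, hinv]
end

section
/- Let (A, μ, α, B) be a quadratic Hom-Novikov algebra with α an algebra automorphism satisfying B(α(x), y) = B(x, α(y)). Define x⋆y = α(μ(x,y)) and B_{α²}(x,y) = B(α²(x), y). Then (A, ⋆, α², B_{α²}) is a quadratic Hom-Novikov algebra; in particular B_{α²}(x⋆y, α²(z)) = B_{α²}(α²(x), y⋆z) and B_{α²} is symmetric and nondegenerate. -/
/-- A quadratic Hom-Novikov algebra with compatible automorphism `α` yields a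
quadratic Hom-Novikov algebra `(A, α∘μ, α², B_{α²})`. -/
theorem stmt_12 {F A : Type*} [Field F] [CharZero F] [AddCommGroup A] [Module F A]
    (μ : A →ₗ[F] A →ₗ[F] A) (α : A ≃ₗ[F] A) (B : A →ₗ[F] A →ₗ[F] F)
    (hα : ∀ x y, α (μ x y) = μ (α x) (α y))
    (hN1 : ∀ x y z, μ (μ x y) (α z) = μ (μ x z) (α y))
    (hN2 : ∀ x y z, μ (μ x y) (α z) - μ (α x) (μ y z)
        = μ (μ y x) (α z) - μ (α y) (μ x z))
    (hBsymm : ∀ x y, B x y = B y x)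
    (hBnd : ∀ x, (∀ y, B x y = 0) → x = 0)
    (hBinv : ∀ x y z, B (μ x y) (α z) = B (α x) (μ y z))
    (hBα : ∀ x y, B (α x) y = B x (α y)) :
    (∀ x y : A, α (α (α (μ x y))) = α (μ (α (α x)) (α (α y)))) ∧
    (∀ x y z : A, α (μ (α (μ x y)) (α (α z))) = α (μ (α (μ x z)) (α (α y)))) ∧
    (∀ x y z : A,
      α (μ (α (μ x y)) (α (α z))) - α (μ (α (α x)) (α (μ y z)))
        = α (μ (α (μ y x)) (α (α z))) - α (μ (α (α y)) (α (μ x z)))) ∧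
    (∀ x y : A, B (α (α x)) y = B (α (α y)) x) ∧
    (∀ x, (∀ y, B (α (α x)) y = 0) → x = 0) ∧
    (∀ x y z : A, B (α (α (α (μ x y)))) (α (α z))
        = B (α (α (α (α x)))) (α (μ y z))) := by
  refine ⟨?_, ?_, ?_, ?_, ?_, ?_⟩
  · intro x y; simp only [hα]
  · intro x y z; simp only [hα]; rw [hN1]
  · intro x y z; simp only [hα, ← map_sub]; exact hN2 _ _ _
  · intro x y; rw [hBα, hBα, hBsymm]
  · intro x h
    have h2 : α (α x) = 0 := hBnd _ fun y => h y
    simpa using h2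
  · intro x y z
    have h : α (α (α (μ x y))) = α (μ (α (α x)) (α (α y))) := by simp only [hα]
    rw [h, hBα, hBinv]
    simp only [hBα, hα]
end

section
/- Let (A, μ, α, B) be a quadratic Hom-Novikov algebra with α an algebra automorphism satisfying B(α(x), y) = B(x, α(y)). Then for all x, y, z, w in A: [y,z]·α(w) = 0 and α(w)·[y,z] = 0, where [y,z] = μ(y,z) − μ(z,y); that is, every commutator lies in the center of A, and consequently in the sub-adjacent Hom-Lie algebra [[x,y],[z,w]] = 0 for all x, y, z, w in A. -/
/-- In a quadratic Hom-Novikov algebra with compatible automorphism, commutators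
lie in the center, and the sub-adjacent Hom-Lie algebra is 2-step nilpotent. -/
theorem stmt_13 {F A : Type*} [Field F] [CharZero F] [AddCommGroup A] [Module F A]
    (μ : A →ₗ[F] A →ₗ[F] A) (α : A ≃ₗ[F] A) (B : A →ₗ[F] A →ₗ[F] F)
    (hα : ∀ x y, α (μ x y) = μ (α x) (α y))
    (hN1 : ∀ x y z, μ (μ x y) (α z) = μ (μ x z) (α y))
    (hN2 : ∀ x y z, μ (μ x y) (α z) - μ (α x) (μ y z)
        = μ (μ y x) (α z) - μ (α y) (μ x z))
    (hBsymm : ∀ x y, B x y = B y x)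
    (hBnd : ∀ x, (∀ y, B x y = 0) → x = 0)
    (hBinv : ∀ x y z, B (μ x y) (α z) = B (α x) (μ y z))
    (hBα : ∀ x y, B (α x) y = B x (α y)) :
    (∀ y z w : A, μ (μ y z - μ z y) (α w) = 0) ∧
    (∀ y z w : A, μ (α w) (μ y z - μ z y) = 0) ∧
    (∀ x y z w : A,
      μ (μ x y - μ y x) (μ z w - μ w z) - μ (μ z w - μ w z) (μ x y - μ y x) = 0) := by
  -- h1 : pairing of (ab)(αc) with α(αd) expressed through f a b c d := B(α(ab)) (α(cd))
  have h1 : ∀ a b c d : A,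
      B (μ (μ a b) (α c)) (α (α d)) = B (α (μ a b)) (α (μ c d)) := by
    intro a b c d
    rw [hBinv, ← hα]
  -- hf1 : f is symmetric in its 2nd and 3rd arguments
  have hf1 : ∀ a b c d : A,
      B (α (μ a b)) (α (μ c d)) = B (α (μ a c)) (α (μ b d)) := by
    intro a b c d
    rw [← h1 a b c d, ← h1 a c b d, hN1]
  -- hX : pairing of (αa)(bc) with α(αd)
  have hX : ∀ a b c d : A,
      B (μ (α a) (μ b c)) (α (α d)) = B (α (μ d a)) (α (μ b c)) := by
    intro a b c d
    rw [hBsymm, ← hBinv, ← hα]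
  -- key : f is symmetric in its 1st and 2nd arguments
  have key : ∀ a b c d : A,
      B (α (μ a b)) (α (μ c d)) = B (α (μ b a)) (α (μ c d)) := by
    intro a b c d
    have h2 := congrArg (fun t => B t (α (α d))) (hN2 a b c)
    simp only [map_sub, LinearMap.sub_apply] at h2
    rw [h1 a b c d, h1 b a c d, hX a b c d, hX b a c d] at h2
    have h3 : B (α (μ d a)) (α (μ b c)) = B (α (μ d b)) (α (μ a c)) := hf1 d a b c
    linear_combination h2 + h3
  -- claim 1 : commutators kill α w on the right
  have claim1 : ∀ y z w : A, μ (μ y z - μ z y) (α w) = 0 := by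
    intro y z w
    apply hBnd
    intro u
    have hu : u = α (α (α.symm (α.symm u))) := by
      rw [α.apply_symm_apply, α.apply_symm_apply]
    rw [hu]
    set d := α.symm (α.symm u) with hd
    have := key y z w d
    simp only [map_sub, LinearMap.sub_apply]
    rw [h1 y z w d, h1 z y w d, key y z w d]
    ring
  -- claim 2 : commutators kill α w on the left
  have claim2 : ∀ y z w : A, μ (α w) (μ y z - μ z y) = 0 := by
    intro y z w
    apply hBnd
    intro u
    have hu : u = α (α (α.symm (α.symm u))) := by
      rw [α.apply_symm_apply, α.apply_symm_apply]
    rw [hu]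
    set d := α.symm (α.symm u) with hd
    simp only [map_sub]
    rw [LinearMap.sub_apply, hX w y z d, hX w z y d]
    have heq : B (α (μ d w)) (α (μ y z)) = B (α (μ d w)) (α (μ z y)) := by
      calc B (α (μ d w)) (α (μ y z)) = B (α (μ y z)) (α (μ d w)) := hBsymm _ _
        _ = B (α (μ z y)) (α (μ d w)) := key y z d w
        _ = B (α (μ d w)) (α (μ z y)) := hBsymm _ _
    rw [heq]
    exact sub_self _
  refine ⟨claim1, claim2, ?_⟩
  intro x y z w
  have e1 : μ (μ x y - μ y x) (μ z w - μ w z) = 0 := by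
    have := claim1 x y (α.symm (μ z w - μ w z))
    rwa [α.apply_symm_apply] at this
  have e2 : μ (μ z w - μ w z) (μ x y - μ y x) = 0 := by
    have := claim2 x y (α.symm (μ z w - μ w z))
    rwa [α.apply_symm_apply] at this
  rw [e1, e2, sub_zero]
end

section
/- Let (A, μ, ν) be a Novikov-Poisson algebra and α: A → A an algebra homomorphism for both products. Then (A, α∘μ, α∘ν, α) is a Hom-Novikov-Poisson algebra. -/
/-- A Novikov-Poisson algebra twisted by an endomorphism yields a
Hom-Novikov-Poisson algebra `(A, α∘μ, α∘ν, α)`. -/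
theorem stmt_14 {F A : Type*} [Field F] [CharZero F] [AddCommGroup A] [Module F A]
    (μ ν : A →ₗ[F] A →ₗ[F] A) (α : A →ₗ[F] A)
    (hνcomm : ∀ x y, ν x y = ν y x)
    (hνassoc : ∀ x y z, ν (ν x y) z = ν x (ν y z))
    (hN1 : ∀ x y z, μ (μ x y) z = μ (μ x z) y)
    (hN2 : ∀ x y z, μ (μ x y) z - μ x (μ y z) = μ (μ y x) z - μ y (μ x z))
    (hNP1 : ∀ x y z, μ (ν x y) z = ν x (μ y z))
    (hNP2 : ∀ x y z, ν (μ x y) z - μ x (ν y z) = ν (μ y x) z - μ y (ν x z))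
    (hαμ : ∀ x y, α (μ x y) = μ (α x) (α y))
    (hαν : ∀ x y, α (ν x y) = ν (α x) (α y)) :
    (∀ x y : A, α (ν x y) = α (ν y x)) ∧
    (∀ x y z : A, α (ν (α x) (α (ν y z))) = α (ν (α (ν x y)) (α z))) ∧
    (∀ x y : A, α (α (ν x y)) = α (ν (α x) (α y))) ∧
    (∀ x y : A, α (α (μ x y)) = α (μ (α x) (α y))) ∧
    (∀ x y z : A, α (μ (α (μ x y)) (α z)) = α (μ (α (μ x z)) (α y))) ∧
    (∀ x y z : A, α (μ (α (μ x y)) (α z)) - α (μ (α x) (α (μ y z)))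
        = α (μ (α (μ y x)) (α z)) - α (μ (α y) (α (μ x z)))) ∧
    (∀ x y z : A, α (μ (α (ν x y)) (α z)) = α (ν (α x) (α (μ y z)))) ∧
    (∀ x y z : A, α (ν (α (μ x y)) (α z)) - α (μ (α x) (α (ν y z)))
        = α (ν (α (μ y x)) (α z)) - α (μ (α y) (α (ν x z)))) := by
  refine ⟨fun x y => by rw [hνcomm],
    fun x y z => by simp only [← hαν]; rw [← hνassoc],
    fun x y => by rw [hαν],
    fun x y => by rw [hαμ],
    fun x y z => by simp only [← hαμ]; rw [hN1],
    fun x y z => by simp only [← hαμ, ← map_sub]; rw [hN2],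
    fun x y z => by simp only [← hαμ, ← hαν]; rw [hNP1],
    fun x y z => by simp only [← hαμ, ← hαν, ← map_sub]; rw [hNP2]⟩
end

section
/- Let (A₁, μ¹, ν¹) and (A₂, μ², ν²) be Novikov-Poisson algebras with algebra homomorphisms α of A₁ and β of A₂. Then (A₁⊗A₂, (α⊗β)∘(μ¹⊗μ²), (α⊗β)∘(ν¹⊗ν²), α⊗β) is a Hom-Novikov-Poisson algebra, where (ν¹⊗ν²)(x₁⊗x₂, y₁⊗y₂) = ν¹(x₁,y₁)⊗ν²(x₂,y₂) and (μ¹⊗μ²)(x₁⊗x₂, y₁⊗y₂) = μ¹(x₁,y₁)⊗ν²(x₂,y₂) + ν¹(x₁,y₁)⊗μ²(x₂,y₂). -/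
open TensorProduct

/-- The tensor product of two Novikov-Poisson algebras, twisted by the tensor
product of endomorphisms, is a Hom-Novikov-Poisson algebra. -/
theorem stmt_16 {F A₁ A₂ : Type*} [Field F]
    [AddCommGroup A₁] [Module F A₁] [AddCommGroup A₂] [Module F A₂]
    (μ₁ ν₁ : A₁ →ₗ[F] A₁ →ₗ[F] A₁) (μ₂ ν₂ : A₂ →ₗ[F] A₂ →ₗ[F] A₂)
    (α : A₁ →ₗ[F] A₁) (β : A₂ →ₗ[F] A₂)
    -- A₁ is a Novikov-Poisson algebra
    (h1comm : ∀ x y, ν₁ x y = ν₁ y x)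
    (h1assoc : ∀ x y z, ν₁ (ν₁ x y) z = ν₁ x (ν₁ y z))
    (h1N1 : ∀ x y z, μ₁ (μ₁ x y) z = μ₁ (μ₁ x z) y)
    (h1N2 : ∀ x y z, μ₁ (μ₁ x y) z - μ₁ x (μ₁ y z) = μ₁ (μ₁ y x) z - μ₁ y (μ₁ x z))
    (h1P1 : ∀ x y z, μ₁ (ν₁ x y) z = ν₁ x (μ₁ y z))
    (h1P2 : ∀ x y z, ν₁ (μ₁ x y) z - μ₁ x (ν₁ y z) = ν₁ (μ₁ y x) z - μ₁ y (ν₁ x z))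
    -- A₂ is a Novikov-Poisson algebra
    (h2comm : ∀ x y, ν₂ x y = ν₂ y x)
    (h2assoc : ∀ x y z, ν₂ (ν₂ x y) z = ν₂ x (ν₂ y z))
    (h2N1 : ∀ x y z, μ₂ (μ₂ x y) z = μ₂ (μ₂ x z) y)
    (h2N2 : ∀ x y z, μ₂ (μ₂ x y) z - μ₂ x (μ₂ y z) = μ₂ (μ₂ y x) z - μ₂ y (μ₂ x z))
    (h2P1 : ∀ x y z, μ₂ (ν₂ x y) z = ν₂ x (μ₂ y z))
    (h2P2 : ∀ x y z, ν₂ (μ₂ x y) z - μ₂ x (ν₂ y z) = ν₂ (μ₂ y x) z - μ₂ y (ν₂ x z))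
    -- α and β are algebra homomorphisms
    (hαμ : ∀ x y, α (μ₁ x y) = μ₁ (α x) (α y))
    (hαν : ∀ x y, α (ν₁ x y) = ν₁ (α x) (α y))
    (hβμ : ∀ x y, β (μ₂ x y) = μ₂ (β x) (β y))
    (hβν : ∀ x y, β (ν₂ x y) = ν₂ (β x) (β y))
    -- the tensor-product structure maps
    (M N : A₁ ⊗[F] A₂ →ₗ[F] A₁ ⊗[F] A₂ →ₗ[F] A₁ ⊗[F] A₂)
    (γ : A₁ ⊗[F] A₂ →ₗ[F] A₁ ⊗[F] A₂)
    (hN : ∀ x₁ x₂ y₁ y₂, N (x₁ ⊗ₜ[F] x₂) (y₁ ⊗ₜ[F] y₂) = ν₁ x₁ y₁ ⊗ₜ[F] ν₂ x₂ y₂)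
    (hM : ∀ x₁ x₂ y₁ y₂, M (x₁ ⊗ₜ[F] x₂) (y₁ ⊗ₜ[F] y₂)
        = μ₁ x₁ y₁ ⊗ₜ[F] ν₂ x₂ y₂ + ν₁ x₁ y₁ ⊗ₜ[F] μ₂ x₂ y₂)
    (hγ : ∀ x y, γ (x ⊗ₜ[F] y) = α x ⊗ₜ[F] β y) :
    -- `(A₁⊗A₂, γ∘M, γ∘N, γ)` is a Hom-Novikov-Poisson algebra:
    (∀ u v, γ (N u v) = γ (N v u)) ∧
    (∀ u v w, γ (N (γ u) (γ (N v w))) = γ (N (γ (N u v)) (γ w))) ∧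
    (∀ u v, γ (γ (N u v)) = γ (N (γ u) (γ v))) ∧
    (∀ u v, γ (γ (M u v)) = γ (M (γ u) (γ v))) ∧
    (∀ u v w, γ (M (γ (M u v)) (γ w)) = γ (M (γ (M u w)) (γ v))) ∧
    (∀ u v w, γ (M (γ (M u v)) (γ w)) - γ (M (γ u) (γ (M v w)))
        = γ (M (γ (M v u)) (γ w)) - γ (M (γ v) (γ (M u w)))) ∧
    (∀ u v w, γ (M (γ (N u v)) (γ w)) = γ (N (γ u) (γ (M v w)))) ∧
    (∀ u v w, γ (N (γ (M u v)) (γ w)) - γ (M (γ u) (γ (N v w)))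
        = γ (N (γ (M v u)) (γ w)) - γ (M (γ v) (γ (N u w)))) := by
  -- derived identities in A₁ and A₂
  have E2₁ : ∀ x y z, ν₁ (μ₁ x y) z = μ₁ (ν₁ x z) y := by
    intro x y z; rw [h1comm, ← h1P1, h1comm z x]
  have E2₂ : ∀ x y z, ν₂ (μ₂ x y) z = μ₂ (ν₂ x z) y := by
    intro x y z; rw [h2comm, ← h2P1, h2comm z x]
  have star₁ : ∀ x y z, μ₁ (ν₁ x z) y - μ₁ x (ν₁ y z) = μ₁ (ν₁ y z) x - μ₁ y (ν₁ x z) := by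
    intro x y z; rw [← E2₁ x y z, ← E2₁ y x z]; exact h1P2 x y z
  have star₂ : ∀ x y z, μ₂ (ν₂ x z) y - μ₂ x (ν₂ y z) = μ₂ (ν₂ y z) x - μ₂ y (ν₂ x z) := by
    intro x y z; rw [← E2₂ x y z, ← E2₂ y x z]; exact h2P2 x y z
  have lc₁ : ∀ x y z, ν₁ x (ν₁ y z) = ν₁ y (ν₁ x z) := by
    intro x y z; rw [← h1assoc, h1comm x y, h1assoc]
  have lc₂ : ∀ x y z, ν₂ x (ν₂ y z) = ν₂ y (ν₂ x z) := by
    intro x y z; rw [← h2assoc, h2comm x y, h2assoc]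
  -- γ commutes with N and M
  have hγN : ∀ u v, γ (N u v) = N (γ u) (γ v) := by
    intro u v
    induction u using TensorProduct.induction_on with
    | zero => simp
    | add x y hx hy => simp only [map_add, LinearMap.add_apply, hx, hy]
    | tmul a b =>
      induction v using TensorProduct.induction_on with
      | zero => simp
      | add x y hx hy => simp only [map_add, LinearMap.add_apply, hx, hy]
      | tmul c d => simp only [hN, hγ, hαν, hβν]
  have hγM : ∀ u v, γ (M u v) = M (γ u) (γ v) := by
    intro u v
    induction u using TensorProduct.induction_on with
    | zero => simp
    | add x y hx hy => simp only [map_add, LinearMap.add_apply, hx, hy]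
    | tmul a b =>
      induction v using TensorProduct.induction_on with
      | zero => simp
      | add x y hx hy => simp only [map_add, LinearMap.add_apply, hx, hy]
      | tmul c d => simp only [hM, map_add, LinearMap.add_apply, hγ, hαμ, hαν, hβμ, hβν]
  -- plain (untwisted) Novikov-Poisson identities on the tensor product
  have pNcomm : ∀ u v, N u v = N v u := by
    intro u v
    induction u using TensorProduct.induction_on with
    | zero => simp
    | add x y hx hy => simp only [map_add, LinearMap.add_apply, hx, hy]
    | tmul a b =>
      induction v using TensorProduct.induction_on with
      | zero => simp
      | add x y hx hy => simp only [map_add, LinearMap.add_apply, hx, hy]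
      | tmul c d => rw [hN, hN, h1comm a c, h2comm b d]
  have pNassoc : ∀ u v w, N (N u v) w = N u (N v w) := by
    intro u v w
    induction u using TensorProduct.induction_on with
    | zero => simp
    | add x y hx hy => simp only [map_add, LinearMap.add_apply, hx, hy]
    | tmul a b =>
      induction v using TensorProduct.induction_on with
      | zero => simp
      | add x y hx hy => simp only [map_add, LinearMap.add_apply, hx, hy]
      | tmul c d =>
        induction w using TensorProduct.induction_on with
        | zero => simp
        | add x y hx hy => simp only [map_add, LinearMap.add_apply, hx, hy]
        | tmul e f => simp only [hN, h1assoc, h2assoc]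
  have pN1 : ∀ u v w, M (M u v) w = M (M u w) v := by
    intro u v w
    induction u using TensorProduct.induction_on with
    | zero => simp
    | add x y hx hy => simp only [map_add, LinearMap.add_apply, hx, hy]
    | tmul a b =>
      induction v using TensorProduct.induction_on with
      | zero => simp
      | add x y hx hy => simp only [map_add, LinearMap.add_apply, hx, hy]
      | tmul c d =>
        induction w using TensorProduct.induction_on with
        | zero => simp
        | add x y hx hy => simp only [map_add, LinearMap.add_apply, hx, hy]
        | tmul e f =>
          simp only [hM, map_add, LinearMap.add_apply, E2₁, E2₂, ← h1P1, ← h2P1,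
            h1assoc, h2assoc]
          rw [h1N1 a c e, h2comm f d, h1comm e c, h2N1 b d f]
          abel
  have pP1 : ∀ u v w, M (N u v) w = N u (M v w) := by
    intro u v w
    induction u using TensorProduct.induction_on with
    | zero => simp
    | add x y hx hy => simp only [map_add, LinearMap.add_apply, hx, hy]
    | tmul a b =>
      induction v using TensorProduct.induction_on with
      | zero => simp
      | add x y hx hy => simp only [map_add, LinearMap.add_apply, hx, hy]
      | tmul c d =>
        induction w using TensorProduct.induction_on with
        | zero => simp
        | add x y hx hy => simp only [map_add, LinearMap.add_apply, hx, hy]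
        | tmul e f =>
          simp only [hM, hN, map_add, LinearMap.add_apply, ← h1P1, ← h2P1,
            h1assoc, h2assoc]
  have hexpN2 : ∀ (a : A₁) (b : A₂) (c : A₁) (d : A₂) (e : A₁) (f : A₂),
      M (M (a ⊗ₜ[F] b) (c ⊗ₜ[F] d)) (e ⊗ₜ[F] f)
        - M (a ⊗ₜ[F] b) (M (c ⊗ₜ[F] d) (e ⊗ₜ[F] f))
      = (μ₁ (μ₁ a c) e - μ₁ a (μ₁ c e)) ⊗ₜ[F] ν₂ b (ν₂ d f)
        + (μ₁ (ν₁ a e) c - μ₁ a (ν₁ c e)) ⊗ₜ[F] μ₂ (ν₂ b d) f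
        + μ₁ (ν₁ a c) e ⊗ₜ[F] (μ₂ (ν₂ b f) d - μ₂ b (ν₂ d f))
        + ν₁ a (ν₁ c e) ⊗ₜ[F] (μ₂ (μ₂ b d) f - μ₂ b (μ₂ d f)) := by
    intro a b c d e f
    simp only [hM, map_add, LinearMap.add_apply, E2₁, E2₂, ← h1P1, ← h2P1,
      h1assoc, h2assoc, TensorProduct.sub_tmul, TensorProduct.tmul_sub]
    abel
  have pN2 : ∀ u v w, M (M u v) w - M u (M v w) = M (M v u) w - M v (M u w) := by
    intro u v w
    induction u using TensorProduct.induction_on with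
    | zero => simp
    | add x y hx hy =>
      simp only [map_add, LinearMap.add_apply]
      rw [add_sub_add_comm, add_sub_add_comm, hx, hy]
    | tmul a b =>
      induction v using TensorProduct.induction_on with
      | zero => simp
      | add x y hx hy =>
        simp only [map_add, LinearMap.add_apply]
        rw [add_sub_add_comm, add_sub_add_comm, hx, hy]
      | tmul c d =>
        induction w using TensorProduct.induction_on with
        | zero => simp
        | add x y hx hy =>
          simp only [map_add, LinearMap.add_apply]
          rw [add_sub_add_comm, add_sub_add_comm, hx, hy]
        | tmul e f =>
          rw [hexpN2 a b c d e f, hexpN2 c d a b e f]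
          rw [h1N2 a c e, lc₂ b d f, star₁ a c e, h2comm b d, star₂ b d f,
            h1comm a c, lc₁ a c e, h2N2 b d f]
  have hexpP2 : ∀ (a : A₁) (b : A₂) (c : A₁) (d : A₂) (e : A₁) (f : A₂),
      N (M (a ⊗ₜ[F] b) (c ⊗ₜ[F] d)) (e ⊗ₜ[F] f)
        - M (a ⊗ₜ[F] b) (N (c ⊗ₜ[F] d) (e ⊗ₜ[F] f))
      = (μ₁ (ν₁ a e) c - μ₁ a (ν₁ c e)) ⊗ₜ[F] ν₂ b (ν₂ d f)
        + ν₁ a (ν₁ c e) ⊗ₜ[F] (μ₂ (ν₂ b f) d - μ₂ b (ν₂ d f)) := by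
    intro a b c d e f
    simp only [hM, hN, map_add, LinearMap.add_apply, E2₁, E2₂, ← h1P1, ← h2P1,
      h1assoc, h2assoc, TensorProduct.sub_tmul, TensorProduct.tmul_sub]
    abel
  have pP2 : ∀ u v w, N (M u v) w - M u (N v w) = N (M v u) w - M v (N u w) := by
    intro u v w
    induction u using TensorProduct.induction_on with
    | zero => simp
    | add x y hx hy =>
      simp only [map_add, LinearMap.add_apply]
      rw [add_sub_add_comm, add_sub_add_comm, hx, hy]
    | tmul a b =>
      induction v using TensorProduct.induction_on with
      | zero => simp
      | add x y hx hy =>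
        simp only [map_add, LinearMap.add_apply]
        rw [add_sub_add_comm, add_sub_add_comm, hx, hy]
      | tmul c d =>
        induction w using TensorProduct.induction_on with
        | zero => simp
        | add x y hx hy =>
          simp only [map_add, LinearMap.add_apply]
          rw [add_sub_add_comm, add_sub_add_comm, hx, hy]
        | tmul e f =>
          rw [hexpP2 a b c d e f, hexpP2 c d a b e f]
          rw [star₁ a c e, lc₂ b d f, lc₁ a c e, star₂ b d f]
  refine ⟨?_, ?_, ?_, ?_, ?_, ?_, ?_, ?_⟩
  · intro u v; exact congrArg γ (pNcomm u v)
  · intro u v w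
    rw [hγN v w, hγN u v]
    exact congrArg γ (pNassoc (γ u) (γ v) (γ w)).symm
  · intro u v; exact congrArg γ (hγN u v)
  · intro u v; exact congrArg γ (hγM u v)
  · intro u v w
    rw [hγM u v, hγM u w]
    exact congrArg γ (pN1 (γ u) (γ v) (γ w))
  · intro u v w
    rw [hγM u v, hγM v w, hγM v u, hγM u w, ← map_sub, ← map_sub]
    exact congrArg γ (pN2 (γ u) (γ v) (γ w))
  · intro u v w
    rw [hγN u v, hγM v w]
    exact congrArg γ (pP1 (γ u) (γ v) (γ w))
  · intro u v w
    rw [hγM u v, hγN v w, hγM v u, hγN u w, ← map_sub, ← map_sub]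
    exact congrArg γ (pP2 (γ u) (γ v) (γ w))
end

section
/- Let (A, ·, α) be a commutative Hom-associative algebra and ∂ a derivation of (A, ·) commuting with α. Define x⋆y = x·∂(y). Then (A, ·, ⋆, α) is a Hom-Novikov-Poisson algebra; in particular the compatibility conditions (x·y)⋆α(z) = α(x)·(y⋆z) and (x⋆y)·α(z) − α(x)⋆(y·z) = (y⋆x)·α(z) − α(y)⋆(x·z) hold. -/
/-- From a commutative Hom-associative algebra with a derivation `∂` commuting
with `α`, the product `x⋆y = x·∂y` yields a Hom-Novikov-Poisson algebra. -/
theorem stmt_17 {F A : Type*} [Field F] [CharZero F] [AddCommGroup A] [Module F A]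
    (μ : A →ₗ[F] A →ₗ[F] A) (α : A →ₗ[F] A) (D : A →ₗ[F] A)
    (hα : ∀ x y, α (μ x y) = μ (α x) (α y))
    (hcomm : ∀ x y, μ x y = μ y x)
    (hassoc : ∀ x y z, μ (α x) (μ y z) = μ (μ x y) (α z))
    (hder : ∀ x y, D (μ x y) = μ (D x) y + μ x (D y))
    (hDα : ∀ x, D (α x) = α (D x)) :
    -- `α` is multiplicative for `⋆`
    (∀ x y : A, α (μ x (D y)) = μ (α x) (D (α y))) ∧
    -- `(A, ⋆, α)` is a Hom-Novikov algebra
    (∀ x y z : A, μ (μ x (D y)) (D (α z)) = μ (μ x (D z)) (D (α y))) ∧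
    (∀ x y z : A,
      μ (μ x (D y)) (D (α z)) - μ (α x) (D (μ y (D z)))
        = μ (μ y (D x)) (D (α z)) - μ (α y) (D (μ x (D z)))) ∧
    -- compatibility conditions
    (∀ x y z : A, μ (μ x y) (D (α z)) = μ (α x) (μ y (D z))) ∧
    (∀ x y z : A,
      μ (μ x (D y)) (α z) - μ (α x) (D (μ y z))
        = μ (μ y (D x)) (α z) - μ (α y) (D (μ x z))) := by
  have key : ∀ a b w : A, μ (α a) (μ b w) = μ (α b) (μ a w) := fun a b w => by
    rw [hassoc, hcomm a b, ← hassoc]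
  refine ⟨fun x y => by rw [hα, hDα], ?_, ?_, fun x y z => by rw [hDα, ← hassoc], ?_⟩
  · intro x y z
    rw [hDα, ← hassoc, hDα, ← hassoc, hcomm (D y) (D z)]
  · intro x y z
    have h1 : ∀ a b, μ (μ a (D b)) (D (α z)) = μ (α a) (μ (D b) (D z)) := fun a b => by
      rw [hDα, ← hassoc]
    have h2 : ∀ a b, μ (α a) (D (μ b (D z)))
        = μ (α a) (μ (D b) (D z)) + μ (α a) (μ b (D (D z))) := fun a b => by
      rw [hder, map_add]
    rw [h1, h1, h2, h2, key x y (D (D z))]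
    abel
  · intro x y z
    have h2 : ∀ a b, μ (α a) (D (μ b z))
        = μ (μ a (D b)) (α z) + μ (α a) (μ b (D z)) := fun a b => by
      rw [hder, map_add, hassoc]
    rw [h2, h2, key x y (D z)]
    abel
end

section
/- Let (A, ·, ∗) be a Novikov-Poisson algebra such that (A, ·) has an identity element 1. Define ∂(x) = 1∗x − (1∗1)·x. Then ∂ is a derivation of (A, ·), i.e., ∂(x·y) = ∂(x)·y + x·∂(y) for all x, y. -/
/-- In a Novikov-Poisson algebra with unity, `∂(x) = 1∗x − (1∗1)·x` is a
derivation of the commutative associative product. -/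
theorem stmt_18 {F A : Type*} [Field F] [CharZero F] [AddCommGroup A] [Module F A]
    (μ ν : A →ₗ[F] A →ₗ[F] A) (one : A)
    (hνcomm : ∀ x y, ν x y = ν y x)
    (hνassoc : ∀ x y z, ν (ν x y) z = ν x (ν y z))
    (hN1 : ∀ x y z, μ (μ x y) z = μ (μ x z) y)
    (hN2 : ∀ x y z, μ (μ x y) z - μ x (μ y z) = μ (μ y x) z - μ y (μ x z))
    (hNP1 : ∀ x y z, μ (ν x y) z = ν x (μ y z))
    (hNP2 : ∀ x y z, ν (μ x y) z - μ x (ν y z) = ν (μ y x) z - μ y (ν x z))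
    (hone : ∀ x, ν one x = x) (hone' : ∀ x, ν x one = x) :
    ∀ x y : A,
      μ one (ν x y) - ν (μ one one) (ν x y)
        = ν (μ one x - ν (μ one one) x) y + ν x (μ one y - ν (μ one one) y) := by
  intro x y
  have h1 : μ x one = ν x (μ one one) := by
    have := hNP1 x one one; rwa [hone' x] at this
  have h2 : μ x y = ν x (μ one y) := by
    have := hNP1 x one y; rwa [hone' x] at this
  have h3 := hNP2 x one y
  rw [hone y] at h3
  -- h3 : ν (μ x one) y - μ x y = ν (μ one x) y - μ one (ν x y)
  have h4 : μ one (ν x y) + (ν (μ x one) y - μ x y) = ν (μ one x) y := by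
    rw [h3]; abel
  simp only [map_sub, LinearMap.sub_apply]
  rw [← hνassoc (μ one one) x y, hνcomm (μ one one) x, ← h1,
    ← hνassoc x (μ one one) y, ← h1, ← h2, ← h4]
  abel
end
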